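/- Let G = (V,E) be a finite simple undirected graph and W ⊆ V a vertex set such that no two distinct vertices of W are adjacent in G. If there is no non-zero vertex for (G,W), then 2·OPT_lp(G,W) ≥ ∑_{w ∈ W} mincut(G, w, W ∖ {w}). -/

import Mathlib

open scoped Classical

variable {V : Type*} [Fintype V] [DecidableEq V]

/-- The graph `G − X`: the graph obtained from `G` by deleting the vertices of `X`
(encoded on the same vertex type: vertices of `X` become isolated). -/
def removeVerts (G : SimpleGraph V) (X : Set V) : SimpleGraph V where
  Adj u v := G.Adj u v ∧ u ∉ X ∧ v ∉ X
  symm := by constructor; rintro u v ⟨h, hu, hv⟩; exact ⟨h.symm, hv, hu⟩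
  loopless := by constructor; rintro v ⟨h, -, -⟩; exact G.irrefl h

/-- The open neighborhood `N(C)` of a vertex set `C`. -/
def nbhd (G : SimpleGraph V) (C : Set V) : Set V :=
  {v | v ∉ C ∧ ∃ u ∈ C, G.Adj u v}

open scoped ENNReal

/-- A simple path of `G` connecting two distinct vertices of `W`. -/
structure WPath {V : Type*} (G : SimpleGraph V) (W : Set V) where
  a : V
  b : V
  ha : a ∈ W
  hb : b ∈ W
  hne : a ≠ b
  walk : G.Walk a b
  ispath : walk.IsPath

/-- The objective value `∑_{v ∈ V ∖ W} d_v` of the multiway-cut LP. -/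
noncomputable def LPObj (W : Set V) (d : V → ℝ≥0∞) : ℝ≥0∞ :=
  ∑ v ∈ Finset.univ.filter (fun v => v ∉ W), d v

/-- Feasibility for the multiway-cut LP: `∑_{v ∈ V(P) ∖ W} d_v ≥ 1` for every
simple path `P` connecting two distinct vertices of `W`. -/
def LPFeasible (G : SimpleGraph V) (W : Set V) (d : V → ℝ≥0∞) : Prop :=
  ∀ P : WPath G W,
    1 ≤ ∑ v ∈ Finset.univ.filter (fun v => v ∈ P.walk.support ∧ v ∉ W), d v

/-- The optimal value of the multiway-cut LP (`⊤` if the LP is infeasible). -/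
noncomputable def OPTlp (G : SimpleGraph V) (W : Set V) : ℝ≥0∞ :=
  ⨅ (d : V → ℝ≥0∞) (_ : LPFeasible G W d), LPObj W d

/-- An optimal solution of the multiway-cut LP. -/
def IsOptimalLP (G : SimpleGraph V) (W : Set V) (d : V → ℝ≥0∞) : Prop :=
  LPFeasible G W d ∧ LPObj W d = OPTlp G W

/-- A non-zero vertex: a vertex `v ∈ V ∖ W` such that every optimal LP solution
assigns it a positive value. -/
def NonZeroVertex (G : SimpleGraph V) (W : Set V) (v : V) : Prop :=
  v ∉ W ∧ ∀ d, IsOptimalLP G W d → d v ≠ 0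

/-- A `{w}`–`(W ∖ {w})` separator: `X ⊆ V ∖ W` whose removal disconnects `w` from
every other vertex of `W`. -/
def IsIsolSep (G : SimpleGraph V) (W : Set V) (w : V) (X : Set V) : Prop :=
  Disjoint X W ∧ ∀ w' ∈ W, w' ≠ w → ¬ (removeVerts G X).Reachable w w'

/-- `mincut(G, w, W ∖ {w})`: the minimum size of a `{w}`–`(W ∖ {w})` separator. -/
noncomputable def mincutIso (G : SimpleGraph V) (W : Set V) (w : V) : ℕ :=
  sInf {n | ∃ X, IsIsolSep G W w X ∧ X.ncard = n}

section FarkasAll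
open Finset

section Farkas

variable {ι A : Type*} [Fintype ι] [Fintype A]

local notation "E" => EuclideanSpace ℝ ι

/-- membership in the cone generated by `gen`. -/
def InCone (gen : A → E) (x : E) : Prop :=
  ∃ lam : A → ℝ, (∀ a, 0 ≤ lam a) ∧ ∑ a, lam a • gen a = x

lemma cara_aux (gen : A → E) (n : ℕ) :
    ∀ lam : A → ℝ, (univ.filter fun a => lam a ≠ 0).card ≤ n → (∀ a, 0 ≤ lam a) →
    ∃ mu : A → ℝ, (∀ a, 0 ≤ mu a) ∧ ∑ a, mu a • gen a = ∑ a, lam a • gen a ∧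
      LinearIndependent ℝ (fun a : {a // mu a ≠ 0} => gen a.1) := by
  induction n with
  | zero =>
    intro lam hcard _
    have hfil : (univ.filter fun a => lam a ≠ 0) = ∅ := Finset.card_eq_zero.mp (Nat.le_zero.mp hcard)
    have hz : ∀ a, lam a = 0 := by
      intro a
      by_contra h
      have : a ∈ (univ.filter fun a => lam a ≠ 0) := by simp [h]
      simp [hfil] at this
    refine ⟨lam, fun a => (hz a).ge, rfl, ?_⟩
    have : IsEmpty {a // lam a ≠ 0} := ⟨fun ⟨a, h⟩ => h (hz a)⟩
    exact linearIndependent_empty_type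
  | succ n IH =>
    intro lam hcard hlam
    by_cases hLI : LinearIndependent ℝ (fun a : {a // lam a ≠ 0} => gen a.1)
    · exact ⟨lam, hlam, rfl, hLI⟩
    · rw [Fintype.linearIndependent_iff] at hLI
      push_neg at hLI
      obtain ⟨g, hgsum, i₀, hgi₀⟩ := hLI
      -- extend g to A by zero
      set g' : A → ℝ := fun a => if h : lam a ≠ 0 then g ⟨a, h⟩ else 0 with hg'def
      have hg'sum : ∑ a, g' a • gen a = 0 := by
        have e1 : ∑ a ∈ univ.filter (fun a => lam a ≠ 0), g' a • gen a
            = ∑ i : {a // lam a ≠ 0}, g' i.1 • gen i.1 :=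
          Finset.sum_subtype _ (by simp) (fun a => g' a • gen a)
        have e2 : ∑ i : {a // lam a ≠ 0}, g' i.1 • gen i.1
            = ∑ i : {a // lam a ≠ 0}, g i • gen i.1 := by
          apply Finset.sum_congr rfl
          intro i _
          simp [hg'def, i.2]
        have e3 : ∑ a ∈ univ.filter (fun a => ¬ lam a ≠ 0), g' a • gen a = 0 := by
          apply Finset.sum_eq_zero
          intro a ha
          simp only [Finset.mem_filter] at ha
          simp [hg'def, ha.2]
        calc ∑ a, g' a • gen a
            = ∑ a ∈ univ.filter (fun a => lam a ≠ 0), g' a • gen a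
              + ∑ a ∈ univ.filter (fun a => ¬ lam a ≠ 0), g' a • gen a :=
              (Finset.sum_filter_add_sum_filter_not univ _ _).symm
          _ = 0 := by rw [e1, e2, e3, hgsum, add_zero]
      have hg'supp : ∀ a, lam a = 0 → g' a = 0 := by
        intro a ha; simp [hg'def, ha]
      have hg'ne : ∃ a, g' a ≠ 0 := by
        refine ⟨i₀.1, ?_⟩
        simpa [hg'def, i₀.2] using hgi₀
      -- make sure there's a positive entry
      have key : ∀ g'' : A → ℝ, (∑ a, g'' a • gen a = 0) → (∀ a, lam a = 0 → g'' a = 0) →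
          (∃ a, 0 < g'' a) →
          ∃ mu : A → ℝ, (∀ a, 0 ≤ mu a) ∧ ∑ a, mu a • gen a = ∑ a, lam a • gen a ∧
            LinearIndependent ℝ (fun a : {a // mu a ≠ 0} => gen a.1) := by
        intro g'' hsum hsupp ⟨ap, hap⟩
        have hTne : (univ.filter fun a => 0 < g'' a).Nonempty := ⟨ap, by simp [hap]⟩
        obtain ⟨a₀, ha₀, hmin⟩ := Finset.exists_min_image _ (fun a => lam a / g'' a) hTne
        simp only [Finset.mem_filter, Finset.mem_univ, true_and] at ha₀
        set t : ℝ := lam a₀ / g'' a₀ with htdef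
        have ht0 : 0 ≤ t := div_nonneg (hlam a₀) ha₀.le
        set mu : A → ℝ := fun a => lam a - t * g'' a with hmudef
        have hmu0 : ∀ a, 0 ≤ mu a := by
          intro a
          by_cases hga : 0 < g'' a
          · have := hmin a (by simp [hga])
            have h1 : t * g'' a ≤ lam a := by
              rw [htdef]
              calc lam a₀ / g'' a₀ * g'' a ≤ lam a / g'' a * g'' a := by
                    apply mul_le_mul_of_nonneg_right this hga.le
                _ = lam a := div_mul_cancel₀ _ hga.ne'
            simpa [hmudef] using sub_nonneg.mpr h1
          · push_neg at hga
            have : 0 ≤ -(t * g'' a) := by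
              rw [neg_nonneg]
              exact mul_nonpos_of_nonneg_of_nonpos ht0 hga
            have := add_nonneg (hlam a) this
            simpa [hmudef, sub_eq_add_neg] using this
        have hmusum : ∑ a, mu a • gen a = ∑ a, lam a • gen a := by
          simp only [hmudef, sub_smul, Finset.sum_sub_distrib, mul_smul]
          rw [← Finset.smul_sum, hsum, smul_zero, sub_zero]
        have hsubset : (univ.filter fun a => mu a ≠ 0) ⊆ (univ.filter fun a => lam a ≠ 0) := by
          intro a ha
          simp only [Finset.mem_filter, Finset.mem_univ, true_and] at ha ⊢
          intro hla
          exact ha (by simp [hmudef, hla, hsupp a hla])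
        have ha₀old : a₀ ∈ (univ.filter fun a => lam a ≠ 0) := by
          simp only [Finset.mem_filter, Finset.mem_univ, true_and]
          intro hla
          exact absurd (hsupp a₀ hla) ha₀.ne'
        have ha₀new : a₀ ∉ (univ.filter fun a => mu a ≠ 0) := by
          simp only [Finset.mem_filter, Finset.mem_univ, true_and, not_not]
          simp only [hmudef, htdef, div_mul_cancel₀ _ ha₀.ne', sub_self]
        have hlt : (univ.filter fun a => mu a ≠ 0).card < (univ.filter fun a => lam a ≠ 0).card :=
          Finset.card_lt_card ⟨hsubset, fun hsup => ha₀new (hsup ha₀old)⟩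
        obtain ⟨mu', h1, h2, h3⟩ := IH mu (by omega) hmu0
        exact ⟨mu', h1, h2.trans hmusum, h3⟩
      by_cases hpos : ∃ a, 0 < g' a
      · exact key g' hg'sum hg'supp hpos
      · push_neg at hpos
        apply key (fun a => - g' a)
        · simp [hg'sum]
        · intro a ha; simp [hg'supp a ha]
        · obtain ⟨a, ha⟩ := hg'ne
          exact ⟨a, by simpa using lt_of_le_of_ne (hpos a) ha⟩

end Farkas


section Farkas2
variable {ι A : Type*} [Fintype ι] [Fintype A]
local notation "E" => EuclideanSpace ℝ ι

noncomputable def combMap (gen : A → E) (s : Finset A) : ({a // a ∈ s} → ℝ) →ₗ[ℝ] E where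
  toFun lam := ∑ i, lam i • gen i.1
  map_add' x y := by simp [add_smul, Finset.sum_add_distrib]
  map_smul' c x := by simp [mul_smul, Finset.smul_sum]

lemma combMap_image_closed (gen : A → E) (s : Finset A)
    (hs : LinearIndependent ℝ (fun a : {a // a ∈ s} => gen a.1)) :
    IsClosed ((combMap gen s) '' {lam | ∀ i, 0 ≤ lam i}) := by
  have hker : LinearMap.ker (combMap gen s) = ⊥ := by
    rw [LinearMap.ker_eq_bot']
    intro m hm
    rw [Fintype.linearIndependent_iff] at hs
    funext i
    exact hs m hm i
  have hce := LinearMap.isClosedEmbedding_of_injective hker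
  apply hce.isClosedMap
  have : {lam : {a // a ∈ s} → ℝ | ∀ i, 0 ≤ lam i} = ⋂ i, {lam | 0 ≤ lam i} := by
    ext; simp [Set.mem_iInter]
  rw [this]
  exact isClosed_iInter (fun i => isClosed_le continuous_const (continuous_apply i))

lemma inCone_iff_union (gen : A → E) (x : E) :
    InCone gen x ↔ x ∈ ⋃ s ∈ {s : Finset A |
        LinearIndependent ℝ (fun a : {a // a ∈ s} => gen a.1)},
      (combMap gen s) '' {lam | ∀ i, 0 ≤ lam i} := by
  constructor
  · rintro ⟨lam, hlam, hsum⟩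
    obtain ⟨mu, hmu0, hmusum, hLI⟩ :=
      cara_aux gen (univ.filter fun a => lam a ≠ 0).card lam le_rfl hlam
    set s : Finset A := univ.filter (fun a => mu a ≠ 0) with hsdef
    have he : ∀ a : {a // a ∈ s}, mu a.1 ≠ 0 := by
      intro a; have := a.2; simp only [hsdef, Finset.mem_filter] at this; exact this.2
    have hLI' : LinearIndependent ℝ (fun a : {a // a ∈ s} => gen a.1) := by
      let e : {a // a ∈ s} ≃ {a // mu a ≠ 0} :=
        Equiv.subtypeEquivRight (by intro a; simp [hsdef])
      have := hLI.comp e e.injective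
      convert this using 1
      rfl
    refine Set.mem_biUnion hLI' ⟨fun i => mu i.1, fun i => hmu0 i.1, ?_⟩
    show ∑ i : {a // a ∈ s}, mu i.1 • gen i.1 = x
    rw [← Finset.sum_subtype s (by simp) (fun a => mu a • gen a)]
    rw [← hsum, ← hmusum]
    symm
    rw [← Finset.sum_filter_add_sum_filter_not univ (fun a => mu a ≠ 0) (fun a => mu a • gen a)]
    have : ∑ a ∈ univ.filter (fun a => ¬ mu a ≠ 0), mu a • gen a = 0 := by
      apply Finset.sum_eq_zero; intro a ha
      simp only [Finset.mem_filter, not_not] at ha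
      simp [ha.2]
    rw [this, add_zero]
  · intro hx
    obtain ⟨s, _, lam, hlam, hsum⟩ := Set.mem_iUnion₂.mp hx
    classical
    set f : A → E := fun a => (if h : a ∈ s then lam ⟨a, h⟩ else (0:ℝ)) • gen a with hfdef
    refine ⟨fun a => if h : a ∈ s then lam ⟨a, h⟩ else 0, ?_, ?_⟩
    · intro a
      by_cases h : a ∈ s
      · simpa [h] using hlam ⟨a, h⟩
      · simp [h]
    · rw [← hsum]
      show ∑ a : A, f a = ∑ i : {a // a ∈ s}, lam i • gen i.1
      have e1 : ∑ a : A, f a = ∑ a ∈ s, f a := by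
        symm
        apply Finset.sum_subset (Finset.subset_univ s)
        intro a _ ha
        simp [hfdef, ha]
      have e2 : ∑ a ∈ s, f a = ∑ i : {a // a ∈ s}, f i.1 :=
        Finset.sum_subtype s (by simp) f
      rw [e1, e2]
      apply Finset.sum_congr rfl
      intro i _
      simp [hfdef, i.2]

lemma isClosed_inCone (gen : A → E) : IsClosed {x | InCone gen x} := by
  have : {x | InCone gen x} = ⋃ s ∈ {s : Finset A |
      LinearIndependent ℝ (fun a : {a // a ∈ s} => gen a.1)},
      (combMap gen s) '' {lam | ∀ i, 0 ≤ lam i} := by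
    ext x; exact inCone_iff_union gen x
  rw [this]
  exact Set.Finite.isClosed_biUnion (Set.toFinite _)
    (fun s hs => combMap_image_closed gen s hs)

open scoped InnerProductSpace in
theorem farkas_sep (gen : A → E) (b : E) (hb : ¬ InCone gen b) :
    ∃ y : E, (∀ a, 0 ≤ ⟪gen a, y⟫_ℝ) ∧ ⟪y, b⟫_ℝ < 0 := by
  set K : ProperCone ℝ E :=
    { carrier := {x | InCone gen x}
      smul_mem' := by
        rintro c x ⟨lam, hlam, hsum⟩
        exact ⟨fun a => (c : ℝ) * lam a, fun a => mul_nonneg c.2 (hlam a),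
          by simp [NNReal.smul_def, mul_smul, ← Finset.smul_sum, hsum]⟩
      add_mem' := by
        rintro x y ⟨lam, hlam, hsum⟩ ⟨mu, hmu, hsum'⟩
        exact ⟨fun a => lam a + mu a, fun a => add_nonneg (hlam a) (hmu a),
          by simp [add_smul, Finset.sum_add_distrib, hsum, hsum']⟩
      zero_mem' := ⟨fun _ => 0, fun _ => le_rfl, by simp⟩
      isClosed' := isClosed_inCone gen } with hKdef
  have hne : (K : Set E).Nonempty := ⟨0, ⟨fun _ => 0, fun _ => le_rfl, by simp⟩⟩
  have hcl : IsClosed (K : Set E) := isClosed_inCone gen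
  obtain ⟨y, hy1, hy2⟩ :=
    K.hyperplane_separation' (show b ∉ K from hb)
  refine ⟨y, fun a => ?_, by rw [real_inner_comm]; exact hy2⟩
  apply hy1
  exact ⟨fun a' => if a' = a then 1 else 0, fun a' => by positivity, by simp⟩

end Farkas2

end FarkasAll

section Dual

open Finset
open scoped ENNReal

variable {V : Type*} [Fintype V] [DecidableEq V]

noncomputable instance (G : SimpleGraph V) (W : Set V) : Fintype (WPath G W) := by
  apply Fintype.ofInjective
    (fun P : WPath G W => (⟨(P.a, P.b), ⟨P.walk, P.ispath⟩⟩ : Σ p : V × V, G.Path p.1 p.2))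
  intro P Q h
  cases P; cases Q
  simp only [Sigma.mk.inj_iff, Prod.mk.injEq] at h
  obtain ⟨⟨h1, h2⟩, h3⟩ := h
  subst h1; subst h2
  have h4 := eq_of_heq h3
  rw [Subtype.mk_eq_mk] at h4
  subst h4
  rfl

/-- vertices outside `W`, as a finset -/
noncomputable def offW (W : Set V) : Finset V := Finset.univ.filter (fun v => v ∉ W)

/-- the support-filter of a `WPath` -/
noncomputable def pfilt {G : SimpleGraph V} {W : Set V} (P : WPath G W) : Finset V :=
  Finset.univ.filter (fun v => v ∈ P.walk.support ∧ v ∉ W)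

lemma pfilt_subset_offW {G : SimpleGraph V} {W : Set V} (P : WPath G W) :
    pfilt P ⊆ offW W := by
  intro v hv
  simp only [pfilt, offW, Finset.mem_filter] at hv ⊢
  exact ⟨hv.1, hv.2.2⟩

lemma lpfeasible_iff {G : SimpleGraph V} {W : Set V} {d : V → ℝ≥0∞} :
    LPFeasible G W d ↔ ∀ P : WPath G W, 1 ≤ ∑ v ∈ pfilt P, d v := Iff.rfl

lemma lpobj_eq {W : Set V} (d : V → ℝ≥0∞) : LPObj W d = ∑ v ∈ offW W, d v := rfl

/-- dual load of a vertex -/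
noncomputable def loadR (G : SimpleGraph V) (W : Set V)
    [Fintype (WPath G W)] (y : WPath G W → ℝ) (v : V) : ℝ :=
  ∑ P : WPath G W, if v ∈ P.walk.support then y P else 0

lemma loadR_eq (G : SimpleGraph V) (W : Set V)
    [Fintype (WPath G W)] (y : WPath G W → ℝ) (v : V) :
    loadR G W y v = ∑ P : WPath G W, if v ∈ P.walk.support then y P else 0 := rfl

/-- real weight of a path -/
noncomputable def WtR {G : SimpleGraph V} {W : Set V} (d : V → ℝ≥0∞) (P : WPath G W) : ℝ :=
  ∑ v ∈ pfilt P, (d v).toReal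

lemma optimal_vals_ne_top {G : SimpleGraph V} {W : Set V} {d : V → ℝ≥0∞}
    (hopt : IsOptimalLP G W d) (hfin : OPTlp G W ≠ ⊤) :
    ∀ v ∈ offW W, d v ≠ ⊤ := by
  intro v hv
  have hobj : LPObj W d ≠ ⊤ := by rw [hopt.2]; exact hfin
  intro htop
  apply hobj
  rw [lpobj_eq]
  exact ENNReal.sum_eq_top.mpr ⟨v, hv, htop⟩

lemma feasible_wtR {G : SimpleGraph V} {W : Set V} {d : V → ℝ≥0∞}
    (hfeas : LPFeasible G W d) (hfin : ∀ v ∈ offW W, d v ≠ ⊤) (P : WPath G W) :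
    1 ≤ WtR d P := by
  have hne : ∀ v ∈ pfilt P, d v ≠ ⊤ := fun v hv => hfin v (pfilt_subset_offW P hv)
  have h1 : ((1 : ℝ≥0∞)).toReal ≤ (∑ v ∈ pfilt P, d v).toReal := by
    apply ENNReal.toReal_mono
    · exact (ENNReal.sum_lt_top.mpr (fun v hv => lt_top_iff_ne_top.mpr (hne v hv))).ne
    · exact hfeas P
  rw [ENNReal.toReal_one, ENNReal.toReal_sum hne] at h1
  exact h1

lemma optimal_obj_toReal {G : SimpleGraph V} {W : Set V} {d : V → ℝ≥0∞}
    (hopt : IsOptimalLP G W d) (hfin : OPTlp G W ≠ ⊤) :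
    ∑ v ∈ offW W, (d v).toReal = (OPTlp G W).toReal := by
  rw [← ENNReal.toReal_sum (optimal_vals_ne_top hopt hfin), ← lpobj_eq, hopt.2]

lemma exchange {G : SimpleGraph V} {W : Set V} (y : WPath G W → ℝ) (d : V → ℝ≥0∞) :
    ∑ P : WPath G W, y P * WtR d P = ∑ v ∈ offW W, (d v).toReal * loadR G W y v := by
  have key : ∀ P : WPath G W, pfilt P = (offW W).filter (fun v => v ∈ P.walk.support) := by
    intro P
    ext v
    simp only [pfilt, offW, Finset.mem_filter, Finset.mem_univ, true_and, Finset.filter_filter]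
    tauto
  calc ∑ P : WPath G W, y P * WtR d P
      = ∑ P : WPath G W, ∑ v ∈ pfilt P, y P * (d v).toReal := by
        simp only [WtR, Finset.mul_sum]
    _ = ∑ P : WPath G W, ∑ v ∈ offW W, if v ∈ P.walk.support then y P * (d v).toReal else 0 := by
        apply Finset.sum_congr rfl
        intro P _
        rw [key P, Finset.sum_filter]
    _ = ∑ v ∈ offW W, ∑ P : WPath G W, if v ∈ P.walk.support then y P * (d v).toReal else 0 :=
        Finset.sum_comm
    _ = ∑ v ∈ offW W, (d v).toReal * loadR G W y v := by
        apply Finset.sum_congr rfl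
        intro v _
        rw [loadR, Finset.mul_sum]
        apply Finset.sum_congr rfl
        intro P _
        by_cases h : v ∈ P.walk.support <;> simp [h, mul_comm]

lemma weak_duality {G : SimpleGraph V} {W : Set V} {y : WPath G W → ℝ} {d : V → ℝ≥0∞}
    (hy0 : ∀ P, 0 ≤ y P) (hld : ∀ v ∈ offW W, loadR G W y v ≤ 1)
    (hfeas : LPFeasible G W d) (hfin : ∀ v ∈ offW W, d v ≠ ⊤) :
    ∑ P : WPath G W, y P ≤ ∑ v ∈ offW W, (d v).toReal := by
  calc ∑ P : WPath G W, y P ≤ ∑ P : WPath G W, y P * WtR d P := by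
        apply Finset.sum_le_sum
        intro P _
        nth_rewrite 1 [← mul_one (y P)]
        exact mul_le_mul_of_nonneg_left (feasible_wtR hfeas hfin P) (hy0 P)
    _ = ∑ v ∈ offW W, (d v).toReal * loadR G W y v := exchange y d
    _ ≤ ∑ v ∈ offW W, (d v).toReal := by
        apply Finset.sum_le_sum
        intro v hv
        nth_rewrite 2 [← mul_one ((d v).toReal)]
        exact mul_le_mul_of_nonneg_left (hld v hv) ENNReal.toReal_nonneg

end Dual

section SD

open Finset
open scoped ENNReal InnerProductSpace

variable {V : Type*} [Fintype V] [DecidableEq V]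

lemma esum_apply {ι α : Type*} [Fintype ι] (s : Finset α) (f : α → EuclideanSpace ℝ ι) (i : ι) :
    (∑ a ∈ s, f a) i = ∑ a ∈ s, f a i := by
  induction s using Finset.cons_induction with
  | empty => rfl
  | cons a s ha ih => rw [Finset.sum_cons, Finset.sum_cons, PiLp.add_apply, ih]

lemma inner_eq_sum {ι : Type*} [Fintype ι] (x y : EuclideanSpace ℝ ι) :
    ⟪x, y⟫_ℝ = ∑ i, x i * y i := by
  simp [PiLp.inner_apply, RCLike.inner_apply, mul_comm]

theorem strong_duality (G : SimpleGraph V) (W : Set V) (d0 : V → ℝ≥0∞)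
    (hopt : IsOptimalLP G W d0) (hfin : OPTlp G W ≠ ⊤) :
    ∃ y : WPath G W → ℝ, (∀ P, 0 ≤ y P) ∧ (∀ v ∈ offW W, loadR G W y v ≤ 1) ∧
      ∑ P : WPath G W, y P = (OPTlp G W).toReal := by
  classical
  set t : ℝ := (OPTlp G W).toReal with htdef
  set gen : ((WPath G W) ⊕ (V ⊕ Unit)) → EuclideanSpace ℝ (Option V) := fun a =>
    match a with
    | Sum.inl P => WithLp.toLp 2 (fun i => match i with
        | none => 1
        | some v => if v ∈ P.walk.support ∧ v ∉ W then 1 else 0)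
    | Sum.inr (Sum.inl u) => WithLp.toLp 2 (fun i => if i = some u ∧ u ∉ W then 1 else 0)
    | Sum.inr (Sum.inr _) => WithLp.toLp 2 (fun i => if i = none then -1 else 0) with hgendef
  set b : EuclideanSpace ℝ (Option V) := WithLp.toLp 2 (fun i => match i with
    | none => t
    | some v => if v ∉ W then 1 else 0) with hbdef
  by_cases hmem : InCone gen b
  · -- extract the dual solution
    obtain ⟨lam, hlam, hsum⟩ := hmem
    set y : WPath G W → ℝ := fun P => lam (Sum.inl P) with hydef
    have hcoord : ∀ i, (∑ P : WPath G W, lam (Sum.inl P) * gen (Sum.inl P) i)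
        + ((∑ u : V, lam (Sum.inr (Sum.inl u)) * gen (Sum.inr (Sum.inl u)) i)
          + lam (Sum.inr (Sum.inr ())) * gen (Sum.inr (Sum.inr ())) i) = b i := by
      intro i
      have h1 := congrArg (fun x : EuclideanSpace ℝ (Option V) => x i) hsum
      simp only at h1
      rw [esum_apply] at h1
      rw [Fintype.sum_sum_type] at h1
      rw [Fintype.sum_sum_type] at h1
      simp only [PiLp.smul_apply, smul_eq_mul, Fintype.sum_unique] at h1
      convert h1 using 3
    have hload : ∀ v ∈ offW W, loadR G W y v ≤ 1 := by
      intro v hv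
      have hvW : v ∉ W := by simpa [offW] using hv
      have h := hcoord (some v)
      have e1 : ∑ P : WPath G W, lam (Sum.inl P) * gen (Sum.inl P) (some v)
          = loadR G W y v := by
        rw [loadR]
        apply Finset.sum_congr rfl
        intro P _
        by_cases hs : v ∈ P.walk.support <;> simp [hgendef, hs, hvW, hydef]
      have e2 : ∑ u : V, lam (Sum.inr (Sum.inl u)) * gen (Sum.inr (Sum.inl u)) (some v)
          = lam (Sum.inr (Sum.inl v)) := by
        have : ∀ u : V, lam (Sum.inr (Sum.inl u)) * gen (Sum.inr (Sum.inl u)) (some v)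
            = if u = v then lam (Sum.inr (Sum.inl u)) else 0 := by
          intro u
          by_cases hu : u = v
          · subst hu; simp [hgendef, hvW]
          · have : ¬ (some v = some u) := by simpa using fun h => hu h.symm
            simp [hgendef, this, hu]
        rw [Finset.sum_congr rfl (fun u _ => this u)]
        simp
      have e3 : gen (Sum.inr (Sum.inr ())) (some v) = 0 := by simp [hgendef]
      have e4 : b (some v) = 1 := by simp [hbdef, hvW]
      rw [e1, e2, e3, e4, mul_zero, add_zero] at h
      have := hlam (Sum.inr (Sum.inl v))
      linarith
    have hval : ∑ P : WPath G W, y P = t := by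
      have h := hcoord none
      have e1 : ∀ P : WPath G W, gen (Sum.inl P) none = 1 := fun P => by simp [hgendef]
      have e2 : ∀ u : V, gen (Sum.inr (Sum.inl u)) none = 0 := fun u => by simp [hgendef]
      have e3 : gen (Sum.inr (Sum.inr ())) none = -1 := by simp [hgendef]
      have e4 : b none = t := by simp [hbdef]
      rw [Finset.sum_congr rfl (fun P _ => by rw [e1 P, mul_one])] at h
      simp only [e2, e3, e4, mul_zero, mul_neg, mul_one, Finset.sum_const_zero, zero_add] at h
      -- h : ∑ P, lam (inl P) + - lam (inr (inr ())) = t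
      have hle : ∑ P : WPath G W, y P ≤ t := by
        have := weak_duality (fun P => hlam (Sum.inl P)) hload hopt.1
          (optimal_vals_ne_top hopt hfin)
        rw [optimal_obj_toReal hopt hfin] at this
        exact this
      have hge : t ≤ ∑ P : WPath G W, y P := by
        have := hlam (Sum.inr (Sum.inr ()))
        simp only [hydef]
        linarith
      linarith
    exact ⟨y, fun P => hlam (Sum.inl P), hload, hval⟩
  · -- separation gives a better primal solution: contradiction
    exfalso
    obtain ⟨z, hz1, hz2⟩ := farkas_sep gen b hmem
    -- basic facts
    have hβ0 : 0 ≤ - z none := by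
      have := hz1 (Sum.inr (Sum.inr ()))
      rw [inner_eq_sum, Fintype.sum_option] at this
      simpa [hgendef] using this
    set β : ℝ := - z none with hβdef
    have hzv : ∀ v ∈ offW W, 0 ≤ z (some v) := by
      intro v hv
      have hvW : v ∉ W := by simpa [offW] using hv
      have h := hz1 (Sum.inr (Sum.inl v))
      rw [inner_eq_sum, Fintype.sum_option] at h
      have e : ∀ u : V, gen (Sum.inr (Sum.inl v)) (some u) * z (some u)
          = if u = v then z (some u) else 0 := by
        intro u
        by_cases hu : u = v
        · subst hu; simp [hgendef, hvW]
        · have : ¬ (some u = some v) := by simpa using hu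
          simp [hgendef, this, hu]
      rw [Finset.sum_congr rfl (fun u _ => e u)] at h
      simpa [hgendef] using h
    have hpath : ∀ P : WPath G W, β ≤ ∑ v ∈ pfilt P, z (some v) := by
      intro P
      have h := hz1 (Sum.inl P)
      rw [inner_eq_sum, Fintype.sum_option] at h
      have e : ∀ u : V, gen (Sum.inl P) (some u) * z (some u)
          = if u ∈ P.walk.support ∧ u ∉ W then z (some u) else 0 := by
        intro u
        by_cases hu : u ∈ P.walk.support ∧ u ∉ W <;> simp [hgendef, hu]
      rw [Finset.sum_congr rfl (fun u _ => e u)] at h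
      rw [← Finset.sum_filter] at h
      have e2 : gen (Sum.inl P) none * z none = z none := by simp [hgendef]
      rw [e2] at h
      rw [pfilt]
      linarith
    have hobj : z none * t + ∑ v ∈ offW W, z (some v) < 0 := by
      have h := hz2
      rw [inner_eq_sum, Fintype.sum_option] at h
      have e : ∀ u : V, z (some u) * b (some u) = if u ∉ W then z (some u) else 0 := by
        intro u
        by_cases hu : u ∉ W <;> simp [hbdef, hu]
      rw [Finset.sum_congr rfl (fun u _ => e u)] at h
      rw [← Finset.sum_filter] at h
      have e2 : z none * b none = z none * t := by simp [hbdef]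
      rw [e2] at h
      rw [offW]
      linarith
    have hS0 : 0 ≤ ∑ v ∈ offW W, z (some v) := Finset.sum_nonneg (fun v hv => hzv v hv)
    by_cases hβ : β = 0
    · rw [hβdef] at hβ
      have : z none = 0 := by linarith [neg_eq_zero.mp hβ]
      rw [this] at hobj
      linarith
    · have hβpos : 0 < β := lt_of_le_of_ne hβ0 (Ne.symm hβ)
      -- build a cheaper feasible solution
      set d : V → ℝ≥0∞ := fun u => if u ∉ W then ENNReal.ofReal (z (some u) / β) else 0
        with hddef
      have hdfeas : LPFeasible G W d := by
        rw [lpfeasible_iff]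
        intro P
        have e : ∀ v ∈ pfilt P, d v = ENNReal.ofReal (z (some v) / β) := by
          intro v hv
          have : v ∉ W := by simp only [pfilt, Finset.mem_filter] at hv; exact hv.2.2
          simp [hddef, this]
        rw [Finset.sum_congr rfl e]
        rw [← ENNReal.ofReal_sum_of_nonneg (fun v hv => div_nonneg
          (hzv v (pfilt_subset_offW P hv)) hβpos.le)]
        rw [ENNReal.one_le_ofReal]
        rw [← Finset.sum_div]
        rw [le_div_iff₀ hβpos, one_mul]
        exact hpath P
      have hobjlt : LPObj W d < OPTlp G W := by
        have e : ∀ v ∈ offW W, d v = ENNReal.ofReal (z (some v) / β) := by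
          intro v hv
          have : v ∉ W := by simpa [offW] using hv
          simp [hddef, this]
        rw [lpobj_eq, Finset.sum_congr rfl e]
        rw [← ENNReal.ofReal_sum_of_nonneg (fun v hv => div_nonneg (hzv v hv) hβpos.le)]
        rw [← Finset.sum_div]
        have ht0 : 0 < t := by
          rcases lt_or_ge 0 t with h | h
          · exact h
          · exfalso
            nlinarith [mul_nonneg hβ0 (neg_nonneg.mpr h)]
        have hlt : (∑ v ∈ offW W, z (some v)) / β < t := by
          rw [div_lt_iff₀ hβpos]
          nlinarith
        calc ENNReal.ofReal ((∑ v ∈ offW W, z (some v)) / β) < ENNReal.ofReal t :=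
              (ENNReal.ofReal_lt_ofReal_iff ht0).mpr hlt
          _ = OPTlp G W := ENNReal.ofReal_toReal hfin
      have : OPTlp G W ≤ LPObj W d := by
        rw [OPTlp]
        exact iInf₂_le d hdfeas
      exact absurd (lt_of_le_of_lt this hobjlt) (lt_irrefl _)

end SD

section GraphPart

open Finset
open scoped ENNReal

variable {V : Type*} [Fintype V] [DecidableEq V]

lemma removeVerts_le (G : SimpleGraph V) (X : Set V) : removeVerts G X ≤ G := by
  intro u v h
  exact h.1

/-- The region of `w`: vertices reachable from `w` avoiding `S`. -/
def Rgn (G : SimpleGraph V) (S : Set V) (w : V) : Set V :=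
  {z | (removeVerts G S).Reachable w z}

/-- The boundary of the region of `w`. -/
def Bdry (G : SimpleGraph V) (S : Set V) (w : V) : Set V := nbhd G (Rgn G S w)

lemma mem_rgn_self (G : SimpleGraph V) (S : Set V) (w : V) : w ∈ Rgn G S w :=
  SimpleGraph.Reachable.refl w

lemma rgn_not_S {G : SimpleGraph V} {S : Set V} {w z : V} (hz : z ∈ Rgn G S w) :
    z = w ∨ z ∉ S := by
  obtain ⟨p⟩ := hz
  induction p with
  | nil => exact Or.inl rfl
  | @cons u x z h p ih =>
    rcases ih with h' | h'
    · subst h'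
      exact Or.inr h.2.2
    · exact Or.inr h'

/-- a `G`-walk from `w` to any element of its region, staying in the region -/
lemma region_walk {G : SimpleGraph V} {S : Set V} {w z : V} (hz : z ∈ Rgn G S w) :
    ∃ r : G.Walk w z, ∀ v ∈ r.support, v ∈ Rgn G S w := by
  obtain ⟨p⟩ := hz
  refine ⟨p.mapLe (removeVerts_le G S), ?_⟩
  intro v hv
  have hsup : (p.mapLe (removeVerts_le G S)).support = p.support := by
    unfold SimpleGraph.Walk.mapLe
    rw [SimpleGraph.Walk.support_map]
    show List.map (fun x => x) p.support = p.support
    rw [List.map_id']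
  rw [hsup] at hv
  exact ⟨p.takeUntil v hv⟩

/-- no W-path avoiding S exists -/
def NoFreePath (G : SimpleGraph V) (W S : Set V) : Prop :=
  ∀ P : WPath G W, ∃ v, v ∈ P.walk.support ∧ v ∉ W ∧ v ∈ S

lemma rgn_no_W {G : SimpleGraph V} {W S : Set V} (hNF : NoFreePath G W S)
    {w : V} (hw : w ∈ W) {w' : V} (hw' : w' ∈ W) (hne : w' ≠ w) :
    w' ∉ Rgn G S w := by
  intro hmem
  obtain ⟨r, hr⟩ := region_walk hmem
  set B := r.bypass with hB
  obtain ⟨v, hv1, hv2, hv3⟩ := hNF ⟨w, w', hw, hw', hne.symm, B, r.bypass_isPath⟩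
  have hvr : v ∈ r.support := r.support_bypass_subset hv1
  rcases rgn_not_S (hr v hvr) with h | h
  · exact hv2 (h ▸ hw)
  · exact h hv3

lemma bdry_disjoint_W {G : SimpleGraph V} {W S : Set V} (hNF : NoFreePath G W S)
    {w : V} (hw : w ∈ W) : ∀ x ∈ Bdry G S w, x ∉ W := by
  rintro x ⟨hxR, u, huR, hadj⟩ hxW
  have hxw : x ≠ w := fun h => hxR (h ▸ mem_rgn_self G S w)
  obtain ⟨r, hr⟩ := region_walk huR
  set M := r.concat hadj with hM
  set B := M.bypass with hB
  obtain ⟨v, hv1, hv2, hv3⟩ := hNF ⟨w, x, hw, hxW, hxw.symm, B, M.bypass_isPath⟩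
  have hvM : v ∈ M.support := M.support_bypass_subset hv1
  rw [hM, SimpleGraph.Walk.support_concat, List.mem_append] at hvM
  rcases hvM with hvr | hvx
  · rcases rgn_not_S (hr v hvr) with h | h
    · exact hv2 (h ▸ hw)
    · exact h hv3
  · simp only [List.mem_singleton] at hvx
    subst hvx
    exact hv2 hxW

lemma bdry_subset_S {G : SimpleGraph V} {W S : Set V} (hSW : ∀ s ∈ S, s ∉ W)
    {w : V} (hw : w ∈ W) : Bdry G S w ⊆ S := by
  rintro x ⟨hxR, u, huR, hadj⟩
  by_contra hxS
  apply hxR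
  have huS : u ∉ S := by
    rcases rgn_not_S huR with h | h
    · subst h; exact fun hs => (hSW u hs) hw
    · exact h
  exact SimpleGraph.Reachable.trans huR (SimpleGraph.Adj.reachable ⟨hadj, huS, hxS⟩)

lemma walk_stays_in_region {G : SimpleGraph V} {S : Set V} {w : V} :
    ∀ {u z : V} (p : (removeVerts G (Bdry G S w)).Walk u z), u ∈ Rgn G S w → z ∈ Rgn G S w := by
  intro u z p
  induction p with
  | nil => exact id
  | @cons u x z h p ih =>
    intro hu
    apply ih
    by_contra hx
    exact h.2.2 ⟨hx, u, hu, h.1⟩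

lemma bdry_isolates {G : SimpleGraph V} {W S : Set V} (hNF : NoFreePath G W S)
    {w : V} (hw : w ∈ W) : IsIsolSep G W w (Bdry G S w) := by
  constructor
  · rw [Set.disjoint_left]
    intro x hx hxW
    exact bdry_disjoint_W hNF hw x hx hxW
  · intro w' hw' hne hreach
    obtain ⟨p⟩ := hreach
    exact rgn_no_W hNF hw hw' hne (walk_stays_in_region p (mem_rgn_self G S w))

lemma mincut_le_bdry {G : SimpleGraph V} {W S : Set V} (hNF : NoFreePath G W S)
    {w : V} (hw : w ∈ W) : mincutIso G W w ≤ (Bdry G S w).ncard :=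
  Nat.sInf_le ⟨Bdry G S w, bdry_isolates hNF hw, rfl⟩

/-- from a path containing `a ≠ b`, a sub-walk from one of them to the endpoint
avoiding the other -/
lemma exclSeg {G : SimpleGraph V} :
    ∀ {u v : V} (p : G.Walk u v), p.IsPath → ∀ (a b : V), a ∈ p.support → b ∈ p.support →
    a ≠ b →
    (∃ q : G.Walk b v, (∀ x ∈ q.support, x ∈ p.support) ∧ a ∉ q.support) ∨
    (∃ q : G.Walk a v, (∀ x ∈ q.support, x ∈ p.support) ∧ b ∉ q.support) := by
  intro u v p
  induction p with
  | nil =>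
    intro _ a b ha hb hab
    simp only [SimpleGraph.Walk.support_nil, List.mem_singleton] at ha hb
    exact absurd (ha.trans hb.symm) hab
  | @cons u x v h p ih =>
    intro hp a b ha hb hab
    have hpp : p.IsPath := hp.of_cons
    have hu : u ∉ p.support := (SimpleGraph.Walk.cons_isPath_iff h p).mp hp |>.2
    rw [SimpleGraph.Walk.support_cons, List.mem_cons] at ha hb
    rcases ha with rfl | ha
    · -- a = u
      rcases hb with rfl | hb
      · exact absurd rfl hab
      · left
        refine ⟨p.dropUntil b hb, ?_, ?_⟩
        · intro y hy
          rw [SimpleGraph.Walk.support_cons, List.mem_cons]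
          exact Or.inr (p.support_dropUntil_subset hb hy)
        · intro hmem
          exact hu (p.support_dropUntil_subset hb hmem)
    · rcases hb with rfl | hb
      · right
        refine ⟨p.dropUntil a ha, ?_, ?_⟩
        · intro y hy
          rw [SimpleGraph.Walk.support_cons, List.mem_cons]
          exact Or.inr (p.support_dropUntil_subset ha hy)
        · intro hmem
          exact hu (p.support_dropUntil_subset ha hmem)
      · rcases ih hpp a b ha hb hab with ⟨q, hq1, hq2⟩ | ⟨q, hq1, hq2⟩
        · left
          exact ⟨q, fun y hy => by
            rw [SimpleGraph.Walk.support_cons, List.mem_cons]; exact Or.inr (hq1 y hy), hq2⟩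
        · right
          exact ⟨q, fun y hy => by
            rw [SimpleGraph.Walk.support_cons, List.mem_cons]; exact Or.inr (hq1 y hy), hq2⟩

end GraphPart

section Parts

open Finset
open scoped ENNReal

variable {V : Type*} [Fintype V] [DecidableEq V]

lemma cs_lemma {G : SimpleGraph V} {W : Set V} {y : WPath G W → ℝ} {d : V → ℝ≥0∞}
    (hy0 : ∀ P, 0 ≤ y P) (hld : ∀ v ∈ offW W, loadR G W y v ≤ 1)
    (hval : ∑ P : WPath G W, y P = (OPTlp G W).toReal)
    (hd : IsOptimalLP G W d) (hfin : OPTlp G W ≠ ⊤) :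
    (∀ P : WPath G W, y P ≠ 0 → WtR d P = 1) ∧
    (∀ v ∈ offW W, d v ≠ 0 → loadR G W y v = 1) := by
  have hdfin := optimal_vals_ne_top hd hfin
  have hwt := fun P => feasible_wtR hd.1 hdfin P
  have hobj := optimal_obj_toReal hd hfin
  have hA : ∀ P ∈ (univ : Finset (WPath G W)), y P ≤ y P * WtR d P := fun P _ => by
    nth_rewrite 1 [← mul_one (y P)]
    exact mul_le_mul_of_nonneg_left (hwt P) (hy0 P)
  have hB : ∀ v ∈ offW W, (d v).toReal * loadR G W y v ≤ (d v).toReal := fun v hv => by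
    nth_rewrite 2 [← mul_one ((d v).toReal)]
    exact mul_le_mul_of_nonneg_left (hld v hv) ENNReal.toReal_nonneg
  have hex := exchange y d
  have heq1 : ∑ P : WPath G W, y P = ∑ P : WPath G W, y P * WtR d P := by
    apply le_antisymm (Finset.sum_le_sum hA)
    rw [hex]
    calc ∑ v ∈ offW W, (d v).toReal * loadR G W y v ≤ ∑ v ∈ offW W, (d v).toReal :=
          Finset.sum_le_sum hB
      _ = (OPTlp G W).toReal := hobj
      _ = ∑ P : WPath G W, y P := hval.symm
  have heq2 : ∑ v ∈ offW W, (d v).toReal * loadR G W y v = ∑ v ∈ offW W, (d v).toReal := by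
    apply le_antisymm (Finset.sum_le_sum hB)
    rw [← hex, ← heq1, hval, hobj]
  constructor
  · intro P hP
    have := (Finset.sum_eq_sum_iff_of_le hA).mp heq1 P (Finset.mem_univ P)
    have h2 : y P * 1 = y P * WtR d P := by rw [mul_one]; exact this
    exact (mul_left_cancel₀ hP h2).symm
  · intro v hv hdv
    have := (Finset.sum_eq_sum_iff_of_le hB).mp heq2 v hv
    have htr : (d v).toReal ≠ 0 := by
      rw [ENNReal.toReal_ne_zero]
      exact ⟨hdv, hdfin v hv⟩
    have h2 : (d v).toReal * loadR G W y v = (d v).toReal * 1 := by rw [mul_one]; exact this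
    exact mul_left_cancel₀ htr h2

lemma bdry_once {G : SimpleGraph V} {W S : Set V} (hSW : ∀ s ∈ S, s ∉ W)
    {w : V} (hw : w ∈ W) {v₂ : V} (hv₂ : v₂ ∈ W) (hnv : w ≠ v₂)
    (pw : G.Walk w v₂) (hpw : pw.IsPath)
    {d : V → ℝ≥0∞}
    (hdzero : ∀ v, v ∉ W → v ∉ S → d v = 0)
    (hdfin : ∀ v ∈ offW W, d v ≠ ⊤)
    (hfeasR : ∀ Q : WPath G W, 1 ≤ WtR d Q)
    (htight : ∑ v ∈ Finset.univ.filter (fun v => v ∈ pw.support ∧ v ∉ W), (d v).toReal = 1)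
    {a b : V} (hab : a ≠ b) (haB : a ∈ Bdry G S w) (hbB : b ∈ Bdry G S w)
    (haP : a ∈ pw.support) (hbP : b ∈ pw.support)
    (hpos : ∀ x ∈ Bdry G S w, d x ≠ 0) : False := by
  have main : ∀ a b : V, a ≠ b → a ∈ Bdry G S w → b ∈ Bdry G S w → a ∈ pw.support →
      (∃ q : G.Walk b v₂, (∀ x ∈ q.support, x ∈ pw.support) ∧ a ∉ q.support) → False := by
    rintro a b hab haB hbB haP ⟨q, hq1, hq2⟩
    have haS : a ∈ S := bdry_subset_S hSW hw haB
    have haW : a ∉ W := hSW a haS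
    obtain ⟨hbR, u, huR, hadj⟩ := hbB
    obtain ⟨r, hr⟩ := region_walk huR
    set M := (r.concat hadj).append q with hM
    set Pb : WPath G W := ⟨w, v₂, hw, hv₂, hnv, M.bypass, M.bypass_isPath⟩ with hPb
    have hfeas := hfeasR Pb
    set Tq : Finset V := Finset.univ.filter (fun v => v ∈ q.support ∧ v ∉ W) with hTq
    have step1 : WtR d Pb ≤ ∑ v ∈ Tq, (d v).toReal := by
      rw [WtR, ← Finset.sum_filter_add_sum_filter_not (pfilt Pb) (fun v => v ∈ q.support)]
      have hz : ∑ v ∈ (pfilt Pb).filter (fun v => ¬ v ∈ q.support), (d v).toReal = 0 := by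
        apply Finset.sum_eq_zero
        intro v hv
        rw [Finset.mem_filter] at hv
        obtain ⟨hv1, hv2⟩ := hv
        rw [pfilt, Finset.mem_filter] at hv1
        obtain ⟨-, hvB, hvW⟩ := hv1
        have hvM : v ∈ M.support := M.support_bypass_subset hvB
        rw [hM, SimpleGraph.Walk.mem_support_append_iff] at hvM
        rcases hvM with hvc | hvq
        · rw [SimpleGraph.Walk.support_concat, List.mem_append] at hvc
          rcases hvc with hvr | hvb
          · rcases rgn_not_S (hr v hvr) with h | h
            · exact absurd (h ▸ hw) hvW
            · rw [hdzero v hvW h]; simp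
          · simp only [List.mem_singleton] at hvb
            subst hvb
            exact absurd q.start_mem_support hv2
        · exact absurd hvq hv2
      rw [hz, add_zero]
      apply Finset.sum_le_sum_of_subset_of_nonneg
      · intro v hv
        rw [Finset.mem_filter] at hv
        obtain ⟨hv1, hv2⟩ := hv
        rw [pfilt, Finset.mem_filter] at hv1
        rw [hTq, Finset.mem_filter]
        exact ⟨Finset.mem_univ v, hv2, hv1.2.2⟩
      · intro v _ _
        exact ENNReal.toReal_nonneg
    have step2 : ∑ v ∈ Tq, (d v).toReal + (d a).toReal ≤ 1 := by
      have haTq : a ∉ Tq := by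
        rw [hTq, Finset.mem_filter]
        push_neg
        intro _ ha
        exact absurd ha hq2
      have : ∑ v ∈ insert a Tq, (d v).toReal ≤ 1 := by
        rw [← htight]
        apply Finset.sum_le_sum_of_subset_of_nonneg
        · intro v hv
          rw [Finset.mem_insert] at hv
          rw [Finset.mem_filter]
          rcases hv with rfl | hv
          · exact ⟨Finset.mem_univ v, haP, haW⟩
          · rw [hTq, Finset.mem_filter] at hv
            exact ⟨Finset.mem_univ v, hq1 v hv.2.1, hv.2.2⟩
        · intro v _ _
          exact ENNReal.toReal_nonneg
      rw [Finset.sum_insert haTq] at this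
      linarith
    have h1 : (1:ℝ) ≤ ∑ v ∈ Tq, (d v).toReal := le_trans hfeas step1
    have h3 : (d a).toReal = 0 := by
      have h0 : 0 ≤ (d a).toReal := ENNReal.toReal_nonneg
      linarith
    have : d a = 0 := by
      have hafin : d a ≠ ⊤ := hdfin a (by rw [offW, Finset.mem_filter]; exact ⟨Finset.mem_univ a, haW⟩)
      rcases (ENNReal.toReal_eq_zero_iff _).mp h3 with h | h
      · exact h
      · exact absurd h hafin
    exact hpos a haB this
  rcases exclSeg pw hpw a b haP hbP hab with h | h
  · exact main a b hab haB hbB haP h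
  · exact main b a hab.symm hbB haB hbP h

lemma no_through {G : SimpleGraph V} {W S : Set V} (hSW : ∀ s ∈ S, s ∉ W)
    {w : V} (hw : w ∈ W)
    (P : WPath G W) (hwa : P.a ≠ w) (hwb : P.b ≠ w)
    {x : V} (hxP : x ∈ P.walk.support) (hxB : x ∈ Bdry G S w)
    {d : V → ℝ≥0∞}
    (hdzero : ∀ v, v ∉ W → v ∉ S → d v = 0)
    (hfeasR : ∀ Q : WPath G W, 1 ≤ WtR d Q)
    (htight : WtR d P = 1) (hdx : d x = 0) : False := by
  obtain ⟨hxR, u, huR, hadj⟩ := hxB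
  obtain ⟨r, hr⟩ := region_walk huR
  set rx := r.concat hadj with hrx
  set t1 := P.walk.takeUntil x hxP with ht1
  set t2 := P.walk.dropUntil x hxP with ht2
  have hxw : x ≠ w := fun h => hxR (h ▸ mem_rgn_self G S w)
  -- helper handling both directions
  have key : ∀ (z : V) (hz : z ∈ W) (hnz : w ≠ z) (t : G.Walk x z)
      (htsub : ∀ v ∈ t.support, v ∈ P.walk.support),
      1 ≤ ∑ v ∈ Finset.univ.filter (fun v => v ∈ t.support ∧ v ∉ W), (d v).toReal := by
    intro z hz hnz t htsub
    set M := rx.append t with hM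
    set Pz : WPath G W := ⟨w, z, hw, hz, hnz, M.bypass, M.bypass_isPath⟩ with hPz
    have hfeas := hfeasR Pz
    refine le_trans hfeas ?_
    rw [WtR, ← Finset.sum_filter_add_sum_filter_not (pfilt Pz) (fun v => v ∈ t.support)]
    have hz0 : ∑ v ∈ (pfilt Pz).filter (fun v => ¬ v ∈ t.support), (d v).toReal = 0 := by
      apply Finset.sum_eq_zero
      intro v hv
      rw [Finset.mem_filter] at hv
      obtain ⟨hv1, hv2⟩ := hv
      rw [pfilt, Finset.mem_filter] at hv1
      obtain ⟨-, hvB, hvW⟩ := hv1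
      have hvM : v ∈ M.support := M.support_bypass_subset hvB
      rw [hM, SimpleGraph.Walk.mem_support_append_iff] at hvM
      rcases hvM with hvc | hvt
      · rw [hrx, SimpleGraph.Walk.support_concat, List.mem_append] at hvc
        rcases hvc with hvr | hvx
        · rcases rgn_not_S (hr v hvr) with h | h
          · exact absurd (h ▸ hw) hvW
          · rw [hdzero v hvW h]; simp
        · simp only [List.mem_singleton] at hvx
          subst hvx
          rw [hdx]; simp
      · exact absurd hvt hv2
    rw [hz0, add_zero]
    apply Finset.sum_le_sum_of_subset_of_nonneg
    · intro v hv
      rw [Finset.mem_filter] at hv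
      obtain ⟨hv1, hv2⟩ := hv
      rw [pfilt, Finset.mem_filter] at hv1
      rw [Finset.mem_filter]
      exact ⟨Finset.mem_univ v, hv2, hv1.2.2⟩
    · intro v _ _
      exact ENNReal.toReal_nonneg
  have key1 := key P.a P.ha (Ne.symm hwa) t1.reverse (by
    intro v hv
    rw [SimpleGraph.Walk.support_reverse, List.mem_reverse] at hv
    exact P.walk.support_takeUntil_subset hxP hv)
  have key2 := key P.b P.hb (Ne.symm hwb) t2 (fun v hv => P.walk.support_dropUntil_subset hxP hv)
  set T1 : Finset V := Finset.univ.filter (fun v => v ∈ t1.reverse.support ∧ v ∉ W) with hT1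
  set T2 : Finset V := Finset.univ.filter (fun v => v ∈ t2.support ∧ v ∉ W) with hT2
  have hinter : T1 ∩ T2 ⊆ {x} := by
    intro v hv
    rw [Finset.mem_inter, hT1, hT2, Finset.mem_filter, Finset.mem_filter] at hv
    obtain ⟨⟨-, hv1, -⟩, ⟨-, hv2, -⟩⟩ := hv
    rw [SimpleGraph.Walk.support_reverse, List.mem_reverse] at hv1
    have hnd : (t1.support ++ t2.support.tail).Nodup := by
      rw [← SimpleGraph.Walk.support_append, ht1, ht2, SimpleGraph.Walk.take_spec]
      exact P.ispath.support_nodup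
    have hdisj := List.disjoint_of_nodup_append hnd
    have : v = x ∨ v ∈ t2.support.tail := by
      have := SimpleGraph.Walk.support_eq_cons t2
      rw [this, List.mem_cons] at hv2
      exact hv2
    rcases this with h | h
    · simp [h]
    · exact absurd (hdisj hv1 h) (fun f => f)
  have hunion : T1 ∪ T2 ⊆ pfilt P := by
    intro v hv
    rw [Finset.mem_union, hT1, hT2, Finset.mem_filter, Finset.mem_filter] at hv
    rw [pfilt, Finset.mem_filter]
    rcases hv with ⟨-, hv1, hvW⟩ | ⟨-, hv2, hvW⟩
    · rw [SimpleGraph.Walk.support_reverse, List.mem_reverse] at hv1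
      exact ⟨Finset.mem_univ v, P.walk.support_takeUntil_subset hxP hv1, hvW⟩
    · exact ⟨Finset.mem_univ v, P.walk.support_dropUntil_subset hxP hv2, hvW⟩
  have hsum : ∑ v ∈ T1, (d v).toReal + ∑ v ∈ T2, (d v).toReal
      = ∑ v ∈ T1 ∪ T2, (d v).toReal + ∑ v ∈ T1 ∩ T2, (d v).toReal :=
    (Finset.sum_union_inter).symm
  have hU : ∑ v ∈ T1 ∪ T2, (d v).toReal ≤ 1 := by
    rw [← htight, WtR]
    exact Finset.sum_le_sum_of_subset_of_nonneg hunion (fun v _ _ => ENNReal.toReal_nonneg)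
  have hI : ∑ v ∈ T1 ∩ T2, (d v).toReal ≤ 0 := by
    calc ∑ v ∈ T1 ∩ T2, (d v).toReal ≤ ∑ v ∈ ({x} : Finset V), (d v).toReal :=
          Finset.sum_le_sum_of_subset_of_nonneg hinter (fun v _ _ => ENNReal.toReal_nonneg)
      _ = 0 := by rw [Finset.sum_singleton, hdx]; simp
  linarith

end Parts


set_option maxHeartbeats 1000000 in
open Finset in
/-- If no two distinct vertices of `W` are adjacent and there is no
non-zero vertex for `(G,W)`, then `2 · OPT_lp(G,W) ≥ ∑_{w ∈ W} mincut(G, w, W ∖ {w})`. -/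
theorem two_optlp_ge_sum_mincut
    (G : SimpleGraph V) (W : Set V)
    (hInd : ∀ w₁ ∈ W, ∀ w₂ ∈ W, w₁ ≠ w₂ → ¬ G.Adj w₁ w₂)
    (hNZ : ∀ v, ¬ NonZeroVertex G W v) :
    ∑ w ∈ Finset.univ.filter (fun w => w ∈ W), (mincutIso G W w : ℝ≥0∞) ≤
      2 * OPTlp G W := by
  by_cases hfin : OPTlp G W = ⊤
  · rw [hfin, ENNReal.mul_top (by norm_num : (2:ℝ≥0∞) ≠ 0)]
    exact le_top
  by_cases hWP : Nonempty (WPath G W)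
  case neg =>
    have h0 : ∀ w ∈ W, mincutIso G W w = 0 := by
      intro w hw
      have hsep : IsIsolSep G W w ∅ := by
        refine ⟨Set.disjoint_left.mpr (by simp), ?_⟩
        intro w' hw' hne hreach
        obtain ⟨p⟩ := hreach
        have pg : G.Walk w w' := p.mapLe (removeVerts_le G ∅)
        exact hWP ⟨⟨w, w', hw, hw', fun h => hne h.symm, pg.bypass, pg.bypass_isPath⟩⟩
      have hin : mincutIso G W w ≤ 0 := Nat.sInf_le ⟨∅, hsep, by simp⟩
      omega
    have hz : ∑ w ∈ Finset.univ.filter (fun w => w ∈ W), ((mincutIso G W w : ℝ≥0∞)) = 0 := by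
      apply Finset.sum_eq_zero
      intro w hw
      rw [Finset.mem_filter] at hw
      rw [h0 w hw.2]
      simp
    rw [hz]
    exact zero_le
  case pos =>
  obtain ⟨P₀⟩ := hWP
  -- outside-W vertices exist
  have hoffne : (offW W).Nonempty := by
    by_contra h
    rw [Finset.not_nonempty_iff_eq_empty] at h
    apply hfin
    have hnof : ∀ d : V → ℝ≥0∞, ¬ LPFeasible G W d := by
      intro d hd
      have h1 : (1:ℝ≥0∞) ≤ ∑ v ∈ pfilt P₀, d v := hd P₀
      have hempty : pfilt P₀ = ∅ := Finset.subset_empty.mp (h ▸ pfilt_subset_offW P₀)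
      rw [hempty, Finset.sum_empty] at h1
      simp at h1
    have htop : ∀ d : V→ℝ≥0∞, (⨅ (_ : LPFeasible G W d), LPObj W d) = ⊤ := fun d => by
      rw [iInf_neg (hnof d)]
    rw [OPTlp]
    simp [htop]
  -- the family of optimal solutions annihilating each vertex
  have hex : ∀ v, v ∈ offW W → ∃ d, IsOptimalLP G W d ∧ d v = 0 := by
    intro v hv
    have hvW : v ∉ W := by simpa [offW] using hv
    have h := hNZ v
    rw [NonZeroVertex] at h
    push_neg at h
    exact h hvW
  choose! F hF1 hF2 using hex
  set N : ℕ := (offW W).card with hN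
  have hNpos : 0 < N := Finset.card_pos.mpr hoffne
  have hNne : (N:ℝ≥0∞) ≠ 0 := Nat.cast_ne_zero.mpr hNpos.ne'
  have hNnetop : (N:ℝ≥0∞) ≠ ⊤ := ENNReal.natCast_ne_top N
  set dh : V → ℝ≥0∞ := fun u => (N:ℝ≥0∞)⁻¹ * ∑ v ∈ offW W, F v u with hdh
  have hdhopt : IsOptimalLP G W dh := by
    constructor
    · intro Q
      show (1:ℝ≥0∞) ≤ ∑ u ∈ pfilt Q, dh u
      have e : ∑ u ∈ pfilt Q, dh u = (N:ℝ≥0∞)⁻¹ * ∑ v ∈ offW W, (∑ u ∈ pfilt Q, F v u) := by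
        simp only [hdh]
        rw [← Finset.mul_sum, Finset.sum_comm]
      rw [e]
      have hge : ∀ v ∈ offW W, (1:ℝ≥0∞) ≤ ∑ u ∈ pfilt Q, F v u := fun v hv => (hF1 v hv).1 Q
      calc (1:ℝ≥0∞) = (N:ℝ≥0∞)⁻¹ * N := (ENNReal.inv_mul_cancel hNne hNnetop).symm
        _ = (N:ℝ≥0∞)⁻¹ * ∑ _v ∈ offW W, (1:ℝ≥0∞) := by
            rw [Finset.sum_const, nsmul_eq_mul, mul_one]
        _ ≤ (N:ℝ≥0∞)⁻¹ * ∑ v ∈ offW W, (∑ u ∈ pfilt Q, F v u) :=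
            mul_le_mul_right (Finset.sum_le_sum hge) _
    · show LPObj W dh = OPTlp G W
      rw [lpobj_eq]
      have e : ∑ u ∈ offW W, dh u = (N:ℝ≥0∞)⁻¹ * ∑ v ∈ offW W, (∑ u ∈ offW W, F v u) := by
        simp only [hdh]
        rw [← Finset.mul_sum, Finset.sum_comm]
      rw [e]
      have e2 : ∀ v ∈ offW W, ∑ u ∈ offW W, F v u = OPTlp G W := fun v hv => by
        rw [← lpobj_eq]
        exact (hF1 v hv).2
      rw [Finset.sum_congr rfl e2, Finset.sum_const, nsmul_eq_mul, ← mul_assoc,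
        ENNReal.inv_mul_cancel hNne hNnetop, one_mul]
  have hdfin_dh : ∀ v ∈ offW W, dh v ≠ ⊤ := optimal_vals_ne_top hdhopt hfin
  have hfeasR_dh : ∀ Q : WPath G W, 1 ≤ WtR dh Q := feasible_wtR hdhopt.1 hdfin_dh
  set S : Set V := {u | u ∉ W ∧ dh u ≠ 0} with hSdef
  have hSW : ∀ s ∈ S, s ∉ W := fun s hs => hs.1
  have hdzero_dh : ∀ v, v ∉ W → v ∉ S → dh v = 0 := by
    intro v h1 h2
    by_contra h
    exact h2 ⟨h1, h⟩
  have hdom : ∀ x ∈ offW W, ∀ u, dh u = 0 → F x u = 0 := by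
    intro x hx u h0
    by_contra hne
    have hle : (N:ℝ≥0∞)⁻¹ * F x u ≤ dh u := by
      simp only [hdh]
      exact mul_le_mul_right (Finset.single_le_sum (fun v _ => zero_le (a := F v u)) hx) _
    rw [h0] at hle
    have := nonpos_iff_eq_zero.mp hle
    rcases mul_eq_zero.mp this with h | h
    · exact (ENNReal.inv_ne_zero.mpr hNnetop) h
    · exact hne h
  have hdzero_F : ∀ x ∈ offW W, ∀ v, v ∉ W → v ∉ S → F x v = 0 :=
    fun x hx v h1 h2 => hdom x hx v (hdzero_dh v h1 h2)
  have hNF : NoFreePath G W S := by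
    intro Q
    by_contra h
    push_neg at h
    have hzero : ∑ u ∈ pfilt Q, dh u = 0 := Finset.sum_eq_zero (fun u hu => by
      rw [pfilt, Finset.mem_filter] at hu
      exact hdzero_dh u hu.2.2 (h u hu.2.1 hu.2.2))
    have h1 : (1:ℝ≥0∞) ≤ ∑ u ∈ pfilt Q, dh u := hdhopt.1 Q
    rw [hzero] at h1
    simp at h1
  -- strong duality and complementary slackness
  obtain ⟨y, hy0, hld, hval⟩ := strong_duality G W dh hdhopt hfin
  obtain ⟨htight_dh, hload1⟩ := cs_lemma hy0 hld hval hdhopt hfin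
  have htight_F : ∀ x ∈ offW W, ∀ P : WPath G W, y P ≠ 0 → WtR (F x) P = 1 :=
    fun x hx P hP => (cs_lemma hy0 hld hval (hF1 x hx) hfin).1 P hP
  -- boundaries
  set XB : V → Finset V := fun w => (Bdry G S w).toFinset with hXB
  have hmemXB : ∀ w x, x ∈ XB w ↔ x ∈ Bdry G S w := by
    intro w x
    simp [hXB, Set.mem_toFinset]
  have hBS : ∀ w ∈ W, ∀ x ∈ XB w, x ∈ S :=
    fun w hw x hx => bdry_subset_S hSW hw ((hmemXB w x).mp hx)
  have hBoff : ∀ w ∈ W, ∀ x ∈ XB w, x ∈ offW W := fun w hw x hx => by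
    rw [offW, Finset.mem_filter]
    exact ⟨Finset.mem_univ x, hSW x (hBS w hw x hx)⟩
  have hBpos : ∀ w ∈ W, ∀ x ∈ Bdry G S w, dh x ≠ 0 :=
    fun w hw x hx => (bdry_subset_S hSW hw hx).2
  -- the per-path crossing bound
  have cross : ∀ w ∈ W, ∀ P : WPath G W,
      (∑ x ∈ XB w, if x ∈ P.walk.support then y P else 0) ≤
        (if w = P.a ∨ w = P.b then y P else 0) := by
    intro w hw P
    by_cases hyP : y P = 0
    · rw [hyP]
      simp
    by_cases hend : w = P.a ∨ w = P.b
    · -- at most one boundary vertex on P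
      have huniq : ∀ a ∈ (XB w).filter (· ∈ P.walk.support),
          ∀ b ∈ (XB w).filter (· ∈ P.walk.support), a = b := by
        intro a ha b hb
        rw [Finset.mem_filter] at ha hb
        by_contra hab
        have haB : a ∈ Bdry G S w := (hmemXB w a).mp ha.1
        have hbB : b ∈ Bdry G S w := (hmemXB w b).mp hb.1
        have htightP : WtR dh P = 1 := htight_dh P hyP
        rcases hend with hwa | hwb
        · subst hwa
          exact bdry_once hSW P.ha P.hb P.hne P.walk P.ispath hdzero_dh hdfin_dh
            hfeasR_dh htightP hab haB hbB ha.2 hb.2 (hBpos P.a P.ha)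
        · subst hwb
          have hfilt : Finset.univ.filter
              (fun v => v ∈ P.walk.reverse.support ∧ v ∉ W) = pfilt P := by
            ext v
            simp [pfilt, SimpleGraph.Walk.support_reverse]
          apply bdry_once hSW P.hb P.ha P.hne.symm P.walk.reverse P.ispath.reverse
            hdzero_dh hdfin_dh hfeasR_dh (by rw [hfilt]; exact htightP) hab haB hbB
            (by rw [SimpleGraph.Walk.support_reverse, List.mem_reverse]; exact ha.2)
            (by rw [SimpleGraph.Walk.support_reverse, List.mem_reverse]; exact hb.2)
            (hBpos P.b P.hb)
      have hcard : ((XB w).filter (· ∈ P.walk.support)).card ≤ 1 :=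
        Finset.card_le_one.mpr huniq
      rw [if_pos hend]
      calc (∑ x ∈ XB w, if x ∈ P.walk.support then y P else 0)
          = ∑ _x ∈ (XB w).filter (· ∈ P.walk.support), y P := (Finset.sum_filter _ _).symm
        _ = ((XB w).filter (· ∈ P.walk.support)).card * y P := by
            rw [Finset.sum_const, nsmul_eq_mul]
        _ ≤ 1 * y P := by
            apply mul_le_mul_of_nonneg_right _ (hy0 P)
            exact_mod_cast hcard
        _ = y P := one_mul _
    · -- w is not an endpoint: no boundary vertex of w lies on P
      rw [if_neg hend]
      apply le_of_eq
      apply Finset.sum_eq_zero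
      intro x hx
      have hxoff : x ∈ offW W := hBoff w hw x hx
      have hxB : x ∈ Bdry G S w := (hmemXB w x).mp hx
      have hxnot : x ∉ P.walk.support := by
        intro hxP
        have hwa : P.a ≠ w := fun h => hend (Or.inl h.symm)
        have hwb : P.b ≠ w := fun h => hend (Or.inr h.symm)
        exact no_through hSW hw P hwa hwb hxP hxB (hdzero_F x hxoff)
          (feasible_wtR (hF1 x hxoff).1 (optimal_vals_ne_top (hF1 x hxoff) hfin))
          (htight_F x hxoff P hyP) (hF2 x hxoff)
      rw [if_neg hxnot]
  -- counting
  have hcount : ∀ w ∈ W, ((XB w).card : ℝ) ≤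
      ∑ P : WPath G W, (if w = P.a ∨ w = P.b then y P else 0) := by
    intro w hw
    have e1 : ((XB w).card : ℝ) = ∑ x ∈ XB w, loadR G W y x := by
      rw [Finset.sum_congr rfl (fun x hx => hload1 x (hBoff w hw x hx)
        (hBpos w hw x ((hmemXB w x).mp hx)))]
      simp
    rw [e1]
    have e2 : ∑ x ∈ XB w, loadR G W y x
        = ∑ P : WPath G W, ∑ x ∈ XB w, (if x ∈ P.walk.support then y P else 0) := by
      exact (Finset.sum_congr rfl (fun x _ => loadR_eq G W y x)).trans Finset.sum_comm
    rw [e2]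
    exact Finset.sum_le_sum (fun P _ => cross w hw P)
  -- total real bound
  set t : ℝ := (OPTlp G W).toReal with htdef
  have htotal : ∑ w ∈ Finset.univ.filter (fun w => w ∈ W), ((XB w).card : ℝ) ≤ 2 * t := by
    calc ∑ w ∈ Finset.univ.filter (fun w => w ∈ W), ((XB w).card : ℝ)
        ≤ ∑ w ∈ Finset.univ.filter (fun w => w ∈ W),
            ∑ P : WPath G W, (if w = P.a ∨ w = P.b then y P else 0) := by
          apply Finset.sum_le_sum
          intro w hw
          rw [Finset.mem_filter] at hw
          exact hcount w hw.2
      _ = ∑ P : WPath G W, ∑ w ∈ Finset.univ.filter (fun w => w ∈ W),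
            (if w = P.a ∨ w = P.b then y P else 0) := Finset.sum_comm
      _ = ∑ P : WPath G W, 2 * y P := by
          apply Finset.sum_congr rfl
          intro P _
          have hfe : (Finset.univ.filter (fun w => w ∈ W)).filter
              (fun w => w = P.a ∨ w = P.b) = {P.a, P.b} := by
            ext w
            simp only [Finset.mem_filter, Finset.mem_univ, true_and, Finset.mem_insert,
              Finset.mem_singleton]
            constructor
            · rintro ⟨-, h⟩; exact h
            · rintro (rfl | rfl)
              · exact ⟨P.ha, Or.inl rfl⟩
              · exact ⟨P.hb, Or.inr rfl⟩
          rw [← Finset.sum_filter, hfe, Finset.sum_const, Finset.card_pair P.hne,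
            nsmul_eq_mul]
          norm_num
      _ = 2 * ∑ P : WPath G W, y P := by rw [Finset.mul_sum]
      _ = 2 * t := by rw [hval]
  -- from mincut to boundary cardinality
  have hmc : ∀ w ∈ W, (mincutIso G W w : ℝ) ≤ ((XB w).card : ℝ) := by
    intro w hw
    have h1 : mincutIso G W w ≤ (Bdry G S w).ncard := mincut_le_bdry hNF hw
    have h2 : (Bdry G S w).ncard = (XB w).card := Set.ncard_eq_toFinset_card' _
    exact_mod_cast h2 ▸ h1
  have hreal : ∑ w ∈ Finset.univ.filter (fun w => w ∈ W), ((mincutIso G W w : ℝ)) ≤ 2 * t := by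
    refine le_trans (Finset.sum_le_sum ?_) htotal
    intro w hw
    rw [Finset.mem_filter] at hw
    exact hmc w hw.2
  -- lift to ℝ≥0∞
  have h2top : 2 * OPTlp G W ≠ ⊤ := ENNReal.mul_ne_top (by norm_num) hfin
  have hLHStop : ∑ w ∈ Finset.univ.filter (fun w => w ∈ W), ((mincutIso G W w : ℝ≥0∞)) ≠ ⊤ := by
    apply (ENNReal.sum_lt_top.mpr _).ne
    intro w _
    exact ENNReal.natCast_lt_top _
  rw [← ENNReal.toReal_le_toReal hLHStop h2top]
  rw [ENNReal.toReal_sum (fun w _ => (ENNReal.natCast_lt_top _).ne)]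
  rw [ENNReal.toReal_mul]
  simp only [ENNReal.toReal_natCast, ENNReal.toReal_ofNat]
  exact hreal
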